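/- Let H = X + Y + Z and let n = (a, a, −b) ∈ ℝ³ with a = (1/√2)·√(1/2 + 1/(2√3)) and b = √(1/2 − 1/(2√3)); then n is a unit vector, and the state ψ = R_n(π)·|0⟩ (where |0⟩ = (1,0)ᵀ ∈ ℂ²) is a ground state of H: it satisfies H·ψ = −√3·ψ. Hence a single Fraxis gate applied to |0⟩ produces the ground state of the toy Hamiltonian X + Y + Z. -/

import Mathlib

open Matrix Complex

noncomputable def PX : Matrix (Fin 2) (Fin 2) ℂ := !![0, 1; 1, 0]
noncomputable def PY : Matrix (Fin 2) (Fin 2) ℂ := !![0, -Complex.I; Complex.I, 0]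
noncomputable def PZ : Matrix (Fin 2) (Fin 2) ℂ := !![1, 0; 0, -1]

/-- The Pauli matrices `σ₁ = X`, `σ₂ = Y`, `σ₃ = Z`. -/
noncomputable def pauli : Fin 3 → Matrix (Fin 2) (Fin 2) ℂ := ![PX, PY, PZ]

/-- `n·σ = n₁X + n₂Y + n₃Z`. -/
noncomputable def nsigma (n : Fin 3 → ℝ) : Matrix (Fin 2) (Fin 2) ℂ :=
  (n 0 : ℂ) • PX + (n 1 : ℂ) • PY + (n 2 : ℂ) • PZ

/-- `R_n(θ) = cos(θ/2)•1 − i·sin(θ/2)•(n·σ)`. -/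
noncomputable def Rgate (n : Fin 3 → ℝ) (θ : ℝ) : Matrix (Fin 2) (Fin 2) ℂ :=
  ((Real.cos (θ / 2) : ℂ)) • (1 : Matrix (Fin 2) (Fin 2) ℂ)
    - (Complex.I * (Real.sin (θ / 2) : ℂ)) • nsigma n

/-! Since `R_n(π) = -i (n·σ)` differs from `n·σ` by a global phase, `ψ` is a ground state exactly
when `(n·σ)|0⟩ = (n₃, n₁ + i n₂)` is. For `n = (a, a, -b)` this vector is an eigenvector of
`X + Y + Z` for `-√3` precisely when `b = (√3 - 1) a`, which the given `a, b` satisfy (compare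
squares); and `2a² + b² = 1` because `2a²` and `b²` are `1/2 ± 1/(2√3)`. -/

theorem Rgate_pi (n : Fin 3 → ℝ) : Rgate n Real.pi = (-I) • nsigma n := by
  simp [Rgate, Real.cos_pi_div_two, Real.sin_pi_div_two, neg_smul]

theorem nsigma_mulVec_ket0 (n : Fin 3 → ℝ) :
    nsigma n *ᵥ ![1, 0] = ![(n 2 : ℂ), n 0 + n 1 * I] := by
  ext i; fin_cases i <;> simp [nsigma, PX, PY, PZ, mulVec, dotProduct]

theorem pauli_sum_mulVec (z w : ℂ) :
    (PX + PY + PZ) *ᵥ ![z, w] = ![z + (1 - I) * w, (1 + I) * z - w] := by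
  ext i; fin_cases i <;> simp [PX, PY, PZ, mulVec, dotProduct, sub_eq_add_neg]

theorem pauli_sum_mulVec_nsigma_ket0 {s a b : ℝ} (hs : s ^ 2 = 3) (hb : b = (s - 1) * a) :
    (PX + PY + PZ) *ᵥ (nsigma ![a, a, -b] *ᵥ ![1, 0]) =
      (-s : ℂ) • (nsigma ![a, a, -b] *ᵥ ![1, 0]) := by
  have hs' : (s : ℂ) ^ 2 = 3 := by exact_mod_cast hs
  rw [nsigma_mulVec_ket0, pauli_sum_mulVec]
  subst hb
  ext i; fin_cases i
  · simp only [Fin.isValue, cons_val, ofReal_neg, ofReal_mul, ofReal_sub, ofReal_one,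
      cons_val_zero, cons_val_one, mul_neg, Fin.zero_eta, Pi.smul_apply, smul_eq_mul, neg_mul,
      neg_neg]
    linear_combination (-a : ℂ) * I_sq - (a : ℂ) * hs'
  · simp; ring

theorem sqrt_half_add_sq_add_sqrt_half_sub_sq {t : ℝ} (ht : |t| ≤ 1 / 2) :
    √(1 / 2 + t) ^ 2 + √(1 / 2 - t) ^ 2 = 1 := by
  rw [abs_le] at ht
  rw [Real.sq_sqrt (by linarith), Real.sq_sqrt (by linarith)]
  ring

theorem sqrt_half_sub_eq_mul_sqrt_half_add :
    √(1 / 2 - 1 / (2 * √3)) = (√3 - 1) * ((√2)⁻¹ * √(1 / 2 + 1 / (2 * √3))) := by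
  have hs : √3 ^ 2 = 3 := Real.sq_sqrt (by norm_num)
  have hs1 : 1 ≤ √3 := by rw [Real.one_le_sqrt]; norm_num
  rw [← Real.sqrt_sq (by positivity : 0 ≤ (√3 - 1) * ((√2)⁻¹ * √(1 / 2 + 1 / (2 * √3)))),
    mul_pow, mul_pow, inv_pow, Real.sq_sqrt (by norm_num : (0 : ℝ) ≤ 2),
    Real.sq_sqrt (by positivity)]
  congr 1
  field_simp
  linear_combination (1 - √3) * hs

theorem fraxis_reaches_ground_state_of_toy_hamiltonian :
    let a : ℝ := (Real.sqrt 2)⁻¹ * Real.sqrt (1 / 2 + 1 / (2 * Real.sqrt 3))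
    let b : ℝ := Real.sqrt (1 / 2 - 1 / (2 * Real.sqrt 3))
    let n : Fin 3 → ℝ := ![a, a, -b]
    let H : Matrix (Fin 2) (Fin 2) ℂ := PX + PY + PZ
    let ψ : Fin 2 → ℂ := (Rgate n Real.pi).mulVec ![1, 0]
    n 0 ^ 2 + n 1 ^ 2 + n 2 ^ 2 = 1 ∧
      H.mulVec ψ = ((-(Real.sqrt 3) : ℝ) : ℂ) • ψ := by
  intro a b n H ψ
  have hs : √3 ^ 2 = 3 := Real.sq_sqrt (by norm_num)
  have hb : b = (√3 - 1) * a := sqrt_half_sub_eq_mul_sqrt_half_add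
  have hc : |1 / (2 * √3)| ≤ 1 / 2 := by
    have : 1 ≤ √3 := by rw [Real.one_le_sqrt]; norm_num
    rw [abs_of_nonneg (by positivity), div_le_div_iff₀ (by positivity) (by norm_num)]
    linarith
  refine ⟨?_, ?_⟩
  · show a ^ 2 + a ^ 2 + (-b) ^ 2 = 1
    have hinv : (√2)⁻¹ ^ 2 = 1 / 2 := by rw [inv_pow, Real.sq_sqrt (by norm_num)]; norm_num
    have := sqrt_half_add_sq_add_sqrt_half_sub_sq hc
    simp only [a, b, neg_sq, mul_pow, hinv]
    linarith
  · have hv : H *ᵥ (nsigma n *ᵥ ![1, 0]) = (-√3 : ℂ) • (nsigma n *ᵥ ![1, 0]) :=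
      pauli_sum_mulVec_nsigma_ket0 hs hb
    simp only [ψ, Rgate_pi, smul_mulVec, mulVec_smul, hv, smul_comm (-I)]
    push_cast
    rfl
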